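/- arXiv:2101.04638 — 5 statements merged into one kernel-verified Lean document; each statement's English description precedes it below -/
import Mathlib

section
/- Let X > e, let N be a positive integer, and let a = (a_0, a_1, …, a_{N−1}) ∈ ℂ^N. Put X_j = 2^j X for j = 0, 1, …, N−1. Then the system of linear equations Σ_{j=0}^{N−1} (−log X_j)^k z_j = a_k for k = 0, 1, …, N−1 has a unique solution z₀ = (z_0, …, z_{N−1}) ∈ ℂ^N, and there is a constant C_N depending only on N such that ‖z₀‖ ≤ C_N (log X)^{N−1} ‖a‖. -/
/-!
Shifting the nodes `-log X_j = -j log 2 - log X` by `log X` factors the system matrix as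
`V₀ᵀ = P · Vᵀ`, where `V₀` is the Vandermonde matrix of the fixed nodes `-j log 2` and `P` is the
Pascal matrix with entries `C(m, k) (log X)^(m-k)` (binomial theorem). Hence `z = (V₀ᵀ)⁻¹ P a`:
the first factor does not depend on `X`, and the ℓ¹ size of `P` is at most `N (2 log X)^(N-1)`.
-/

open Matrix Finset

lemma sum_fin_pow_mul_pow_mul_choose {R : Type*} [CommSemiring R] (x y : R) {n N : ℕ}
    (hn : n < N) :
    ∑ k : Fin N, x ^ (k : ℕ) * y ^ (n - k) * n.choose k = (x + y) ^ n := by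
  rw [add_pow, Fin.sum_univ_eq_sum_range (fun k => x ^ k * y ^ (n - k) * n.choose k)]
  refine (sum_subset (range_subset_range.mpr hn) fun k _ hk => ?_).symm
  simp [Nat.choose_eq_zero_of_lt (not_lt.mp (mt mem_range.mpr hk))]

lemma sum_norm_mulVec_le {ι κ 𝕜 : Type*} [Fintype ι] [Fintype κ] [SeminormedRing 𝕜]
    (M : Matrix ι κ 𝕜) (v : κ → 𝕜) :
    ∑ i, ‖(M *ᵥ v) i‖ ≤ (∑ i, ∑ j, ‖M i j‖) * ∑ j, ‖v j‖ := by
  rw [sum_mul]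
  refine sum_le_sum fun i _ => ?_
  calc ‖(M *ᵥ v) i‖ ≤ ∑ j, ‖M i j‖ * ‖v j‖ :=
        (norm_sum_le _ _).trans (sum_le_sum fun j _ => norm_mul_le _ _)
    _ ≤ ∑ j, ‖M i j‖ * ∑ j, ‖v j‖ :=
        sum_le_sum fun j _ => by gcongr; exact single_le_sum (fun _ _ => norm_nonneg _) (mem_univ j)
    _ = (∑ j, ‖M i j‖) * ∑ j, ‖v j‖ := (sum_mul ..).symm

lemma existsUnique_vandermonde_transpose_mulVec_eq {K : Type*} [Field K] {n : ℕ}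
    {v : Fin n → K} (hv : Function.Injective v) (a : Fin n → K) :
    ∃! z, (vandermonde v)ᵀ *ᵥ z = a := by
  have hunit : IsUnit (vandermonde v)ᵀ := by
    rw [isUnit_iff_isUnit_det, det_transpose]
    exact (det_vandermonde_ne_zero_iff.mpr hv).isUnit
  exact Function.Bijective.existsUnique
    ⟨mulVec_injective_iff_isUnit.mpr hunit, mulVec_surjective_iff_isUnit.mpr hunit⟩ a

def pascalMatrix {R : Type*} [CommSemiring R] {N : ℕ} (c : R) : Matrix (Fin N) (Fin N) R :=
  of fun m k => c ^ ((m : ℕ) - k) * (m : ℕ).choose k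

lemma vandermonde_transpose_eq_pascalMatrix_mul {R : Type*} [CommRing R] {N : ℕ}
    (v : Fin N → R) (c : R) :
    (vandermonde v)ᵀ = pascalMatrix c * (vandermonde fun j => v j - c)ᵀ := by
  ext m j
  simp only [transpose_apply, vandermonde_apply, mul_apply, pascalMatrix, of_apply]
  have hbinom := sum_fin_pow_mul_pow_mul_choose (v j - c) c m.isLt
  rw [sub_add_cancel] at hbinom
  rw [← hbinom]
  exact sum_congr rfl fun k _ => by ring

lemma eq_vandermonde_inv_mulVec_pascalMatrix_mulVec {K : Type*} [Field K] {N : ℕ}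
    {v : Fin N → K} (hv : Function.Injective v) (c : K) {z a : Fin N → K}
    (hz : (vandermonde fun j => v j - c)ᵀ *ᵥ z = a) :
    z = ((vandermonde v)ᵀ)⁻¹ *ᵥ (pascalMatrix c *ᵥ a) := by
  have hdet : IsUnit (vandermonde v)ᵀ.det := by
    rw [det_transpose]
    exact (det_vandermonde_ne_zero_iff.mpr hv).isUnit
  rw [← hz, mulVec_mulVec, mulVec_mulVec, Matrix.mul_assoc,
    ← vandermonde_transpose_eq_pascalMatrix_mul, nonsing_inv_mul _ hdet, one_mulVec]

lemma sum_norm_pascalMatrix {𝕜 : Type*} [RCLike 𝕜] {N : ℕ} (c : 𝕜) :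
    ∑ m, ∑ k, ‖(pascalMatrix c : Matrix (Fin N) (Fin N) 𝕜) m k‖ =
      ∑ m : Fin N, (1 + ‖c‖) ^ (m : ℕ) := by
  refine sum_congr rfl fun m _ => ?_
  rw [← sum_fin_pow_mul_pow_mul_choose 1 ‖c‖ m.isLt]
  refine sum_congr rfl fun k _ => ?_
  simp [pascalMatrix]

lemma sum_norm_pascalMatrix_le {𝕜 : Type*} [RCLike 𝕜] {N : ℕ} {c : 𝕜} (hc : 1 ≤ ‖c‖) :
    ∑ m, ∑ k, ‖(pascalMatrix c : Matrix (Fin N) (Fin N) 𝕜) m k‖ ≤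
      N * (2 ^ (N - 1) * ‖c‖ ^ (N - 1)) := by
  rw [sum_norm_pascalMatrix, ← mul_pow]
  calc ∑ m : Fin N, (1 + ‖c‖) ^ (m : ℕ) ≤ ∑ _m : Fin N, (2 * ‖c‖) ^ (N - 1) :=
        sum_le_sum fun m _ => calc
          (1 + ‖c‖) ^ (m : ℕ) ≤ (2 * ‖c‖) ^ (m : ℕ) := by gcongr; linarith
          _ ≤ (2 * ‖c‖) ^ (N - 1) := pow_le_pow_right₀ (by linarith) (by omega)
    _ = N * (2 * ‖c‖) ^ (N - 1) := by simp

theorem vandermonde_system_general (N : ℕ) :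
    ∃ C : ℝ, 0 < C ∧
      ∀ X : ℝ, Real.exp 1 < X → ∀ a : Fin N → ℂ,
        (∃! z : Fin N → ℂ, ∀ k : Fin N,
          ∑ j : Fin N, ((-Real.log (2 ^ (j : ℕ) * X) : ℂ)) ^ (k : ℕ) * z j = a k) ∧
        ∀ z : Fin N → ℂ,
          (∀ k : Fin N,
            ∑ j : Fin N, ((-Real.log (2 ^ (j : ℕ) * X) : ℂ)) ^ (k : ℕ) * z j = a k) →
          (∑ j, ‖z j‖) ≤ C * Real.log X ^ (N - 1) * ∑ k, ‖a k‖ := by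
  set s : Fin N → ℂ := fun j => -((j : ℕ) * (Real.log 2 : ℂ))
  have hs : Function.Injective s := fun i j h => by
    have hlog2 : (Real.log 2 : ℂ) ≠ 0 := Complex.ofReal_ne_zero.mpr (by positivity)
    exact Fin.ext (Nat.cast_injective (mul_right_cancel₀ hlog2 (neg_injective h)))
  set B := ∑ j, ∑ m, ‖((vandermonde s)ᵀ)⁻¹ j m‖
  refine ⟨B * (N * 2 ^ (N - 1)) + 1, by positivity, fun X hX a => ?_⟩
  set L := Real.log X
  have hX0 : 0 < X := (Real.exp_pos 1).trans hX
  have hL : 1 < L := (Real.lt_log_iff_exp_lt hX0).mpr hX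
  have hsys : ∀ z : Fin N → ℂ, (∀ k : Fin N,
      ∑ j : Fin N, ((-Real.log (2 ^ (j : ℕ) * X) : ℂ)) ^ (k : ℕ) * z j = a k) ↔
        (vandermonde fun j => s j - L)ᵀ *ᵥ z = a := fun z => by
    rw [funext_iff]
    refine forall_congr' fun k => Eq.congr_left (sum_congr rfl fun j _ => ?_)
    rw [Real.log_mul (by positivity) hX0.ne', Real.log_pow]
    simp only [transpose_apply, vandermonde_apply, s]
    push_cast
    ring
  simp only [hsys]
  refine ⟨existsUnique_vandermonde_transpose_mulVec_eq (sub_left_injective.comp hs) a,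
    fun z hz => ?_⟩
  have hLnorm : ‖(L : ℂ)‖ = L := by rw [Complex.norm_real, Real.norm_of_nonneg (by linarith)]
  have hP := sum_norm_pascalMatrix_le (N := N) (hLnorm ▸ hL.le)
  rw [hLnorm] at hP
  rw [eq_vandermonde_inv_mulVec_pascalMatrix_mulVec hs L hz]
  calc _ ≤ B * ∑ m, ‖(pascalMatrix (L : ℂ) *ᵥ a) m‖ := sum_norm_mulVec_le _ _
    _ ≤ B * (N * (2 ^ (N - 1) * L ^ (N - 1)) * ∑ k, ‖a k‖) := by
        gcongr; exact (sum_norm_mulVec_le _ _).trans (by gcongr)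
    _ = B * (N * 2 ^ (N - 1)) * L ^ (N - 1) * ∑ k, ‖a k‖ := by ring
    _ ≤ (B * (N * 2 ^ (N - 1)) + 1) * L ^ (N - 1) * ∑ k, ‖a k‖ := by gcongr; linarith

/-- **Lemma 2.1 (Vandermonde system).**  For `X > e` and nodes `X_j = 2^j X`, the system
`∑_j (-log X_j)^k z_j = a_k` (k = 0, …, N-1) has a unique solution `z₀`, and the solution
satisfies `‖z₀‖ ≤ C_N (log X)^{N-1} ‖a‖` with a constant depending only on `N`. -/
theorem vandermonde_system (N : ℕ) (hN : 0 < N) :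
    ∃ C : ℝ, 0 < C ∧
      ∀ X : ℝ, Real.exp 1 < X → ∀ a : Fin N → ℂ,
        (∃! z : Fin N → ℂ, ∀ k : Fin N,
          ∑ j : Fin N, ((-Real.log (2 ^ (j : ℕ) * X) : ℂ)) ^ (k : ℕ) * z j = a k) ∧
        ∀ z : Fin N → ℂ,
          (∀ k : Fin N,
            ∑ j : Fin N, ((-Real.log (2 ^ (j : ℕ) * X) : ℂ)) ^ (k : ℕ) * z j = a k) →
          (∑ j, ‖z j‖) ≤ C * Real.log X ^ (N - 1) * ∑ k, ‖a k‖ :=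
  vandermonde_system_general N
end

section
/- Let N be a positive integer larger than two, and suppose positive real numbers r_1 ≤ r_2 ≤ ⋯ ≤ r_N satisfy r_N ≤ Σ_{n=1}^{N−1} r_n. Then { Σ_{n=1}^N r_n · exp(−2πi θ_n) : θ_1, …, θ_N ∈ [0,1) } = { z ∈ ℂ : |z| ≤ Σ_{n=1}^N r_n }; that is, the sums with arbitrary phases fill out the entire closed disk of radius Σ_{n=1}^N r_n centered at the origin. -/
open Complex

/-!
Let `a = r_N` be the largest length. The remaining lengths can be split greedily into two groups
with sums `b` and `c` such that `|b - c| ≤ a ≤ b + c`. Giving all members of a group a common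
phase, it suffices to write every `z` with `‖z‖ ≤ a + b + c` as `u + p + q` with `‖u‖ = a`,
`‖p‖ = b`, `‖q‖ = c`. This follows by applying twice the fact that `z` is a sum of vectors of
lengths `b` and `c` as soon as `|b - c| ≤ ‖z‖ ≤ b + c`: as `u` runs over the (connected) circle of
radius `b`, the distance `‖z - u‖` takes every value between `|‖z‖ - b|` and `‖z‖ + b`.
-/

open scoped Real

theorem Finset.exists_subset_abs_two_mul_sum_sub_sum_le {ι : Type*} (s : Finset ι) {f : ι → ℝ}
    {a : ℝ} (ha : 0 ≤ a) (hf : ∀ i ∈ s, 0 ≤ f i ∧ f i ≤ a) :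
    ∃ t ⊆ s, |2 * ∑ i ∈ t, f i - ∑ i ∈ s, f i| ≤ a := by
  classical
  induction s using Finset.induction_on with
  | empty => exact ⟨∅, subset_rfl, by simpa using ha⟩
  | insert x s hx ih =>
    obtain ⟨t, hts, ht⟩ := ih fun i hi => hf i (mem_insert_of_mem hi)
    obtain ⟨hx0, hxa⟩ := hf x (mem_insert_self x s)
    rw [sum_insert hx]
    rw [abs_le] at ht
    rcases le_or_gt (2 * ∑ i ∈ t, f i) (∑ i ∈ s, f i) with hle | hgt
    · refine ⟨insert x t, insert_subset_insert x hts, ?_⟩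
      rw [sum_insert fun hxt => hx (hts hxt), abs_le]
      constructor <;> linarith
    · refine ⟨t, hts.trans (subset_insert x s), abs_le.mpr ⟨?_, ?_⟩⟩ <;> linarith

section

variable {E : Type*} [NormedAddCommGroup E] [NormedSpace ℝ E]

theorem exists_norm_eq_one_and_eq_norm_smul [Nontrivial E] (z : E) :
    ∃ w : E, ‖w‖ = 1 ∧ z = ‖z‖ • w := by
  rcases eq_or_ne z 0 with rfl | hz
  · obtain ⟨w, hw⟩ := exists_norm_eq E zero_le_one
    exact ⟨w, hw, by simp⟩
  · refine ⟨‖z‖⁻¹ • z, norm_smul_inv_norm hz, ?_⟩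
    rw [smul_smul, mul_inv_cancel₀ (norm_ne_zero_iff.mpr hz), one_smul]

theorem exists_add_eq_of_abs_sub_le_norm_le_add (hE : 1 < Module.rank ℝ E) {b c : ℝ} {z : E}
    (hlow : |b - c| ≤ ‖z‖) (hup : ‖z‖ ≤ b + c) :
    ∃ u v : E, ‖u‖ = b ∧ ‖v‖ = c ∧ u + v = z := by
  have : Nontrivial E := rank_pos_iff_nontrivial.mp (zero_lt_one.trans hE)
  obtain ⟨w, hw, hzw⟩ := exists_norm_eq_one_and_eq_norm_smul z
  have hb : 0 ≤ b := by linarith [neg_abs_le (b - c)]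
  have hnear : ‖z - b • w‖ = |‖z‖ - b| := by
    rw [show z - b • w = (‖z‖ - b) • w by rw [sub_smul, ← hzw], norm_smul, hw, mul_one,
      Real.norm_eq_abs]
  have hfar : ‖z - -(b • w)‖ = ‖z‖ + b := by
    rw [show z - -(b • w) = (‖z‖ + b) • w by rw [add_smul, ← hzw, sub_neg_eq_add], norm_smul, hw,
      mul_one, Real.norm_of_nonneg (by positivity)]
  obtain ⟨u, hu, huz⟩ : c ∈ (fun u => ‖z - u‖) '' Metric.sphere 0 b := by
    refine (isPreconnected_sphere hE 0 b).intermediate_value (f := fun u => ‖z - u‖)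
      (a := b • w) (b := -(b • w)) ?_ ?_ (by fun_prop) ⟨?_, ?_⟩
    · simp [norm_smul, hw, abs_of_nonneg hb]
    · simp [norm_smul, hw, abs_of_nonneg hb]
    · rw [hnear, abs_le]; constructor <;> linarith [abs_le.mp hlow]
    · rw [hfar]; linarith [le_abs_self (b - c), neg_abs_le (b - c)]
  exact ⟨u, z - u, by simpa using hu, huz, add_sub_cancel u z⟩

theorem exists_add_add_eq_of_abs_sub_le_of_le_add (hE : 1 < Module.rank ℝ E) {a b c : ℝ}
    {z : E} (hbc : |b - c| ≤ a) (ha : a ≤ b + c) (hz : ‖z‖ ≤ a + b + c) :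
    ∃ u p q : E, ‖u‖ = a ∧ ‖p‖ = b ∧ ‖q‖ = c ∧ u + (p + q) = z := by
  -- `p + q` needs a length in `[|b - c|, b + c] ∩ [|a - ‖z‖|, a + ‖z‖]`; `s` is the least one.
  set s := max |b - c| |a - ‖z‖|
  have hz0 := norm_nonneg z
  have hs_le : s ≤ b + c :=
    max_le (by linarith [abs_le.mp hbc]) (abs_le.mpr ⟨by linarith, by linarith⟩)
  have hs_le' : s ≤ a + ‖z‖ :=
    max_le (by linarith) (abs_le.mpr ⟨by linarith [abs_nonneg (b - c)], by linarith⟩)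
  have hs_ge : |a - ‖z‖| ≤ s := le_max_right _ _
  have hlow : |a - s| ≤ ‖z‖ := abs_le.mpr ⟨by linarith, by linarith [le_abs_self (a - ‖z‖)]⟩
  have hup : ‖z‖ ≤ a + s := by linarith [neg_abs_le (a - ‖z‖)]
  obtain ⟨u, v, hu, hv, rfl⟩ := exists_add_eq_of_abs_sub_le_norm_le_add hE hlow hup
  obtain ⟨p, q, hp, hq, rfl⟩ :=
    exists_add_eq_of_abs_sub_le_norm_le_add hE (hv ▸ le_max_left _ _) (hv ▸ hs_le)
  exact ⟨u, p, q, hu, hp, hq, rfl⟩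

open Finset in
theorem exists_norm_eq_one_sum_smul_eq {ι : Type*} [Fintype ι] [DecidableEq ι]
    (hE : 1 < Module.rank ℝ E) {r : ι → ℝ} (i₀ : ι) (hr : ∀ i, 0 ≤ r i) (hmax : ∀ i, r i ≤ r i₀)
    (hi₀ : r i₀ ≤ ∑ i ∈ univ.erase i₀, r i) {z : E} (hz : ‖z‖ ≤ ∑ i, r i) :
    ∃ w : ι → E, (∀ i, ‖w i‖ = 1) ∧ ∑ i, r i • w i = z := by
  have : Nontrivial E := rank_pos_iff_nontrivial.mp (zero_lt_one.trans hE)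
  set s := univ.erase i₀
  obtain ⟨t, hts, ht⟩ := s.exists_subset_abs_two_mul_sum_sub_sum_le (hr i₀)
    fun i _ => ⟨hr i, hmax i⟩
  set b := ∑ i ∈ t, r i
  set c := ∑ i ∈ s \ t, r i
  have hsum_s : ∑ i ∈ s, r i = b + c := by rw [← sum_sdiff hts, add_comm]
  have hsum : ∑ i, r i = r i₀ + b + c := by
    rw [← add_sum_erase _ _ (mem_univ i₀), hsum_s, add_assoc]
  obtain ⟨u, p, q, hu, hp, hq, rfl⟩ := exists_add_add_eq_of_abs_sub_le_of_le_add hE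
    (by rwa [hsum_s, show 2 * b - (b + c) = b - c by ring] at ht) (hsum_s ▸ hi₀) (hsum ▸ hz)
  obtain ⟨x, hx, hux⟩ := exists_norm_eq_one_and_eq_norm_smul u
  obtain ⟨y, hy, hpy⟩ := exists_norm_eq_one_and_eq_norm_smul p
  obtain ⟨y', hy', hqy'⟩ := exists_norm_eq_one_and_eq_norm_smul q
  rw [hu] at hux
  rw [hp] at hpy
  rw [hq] at hqy'
  subst hux hpy hqy'
  set w : ι → E := fun i => if i = i₀ then x else if i ∈ t then y else y'
  have hwt : ∑ i ∈ t, r i • w i = b • y := by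
    rw [sum_smul]
    refine sum_congr rfl fun i hi => ?_
    simp [w, ne_of_mem_erase (hts hi), hi]
  have hwt' : ∑ i ∈ s \ t, r i • w i = c • y' := by
    rw [sum_smul]
    refine sum_congr rfl fun i hi => ?_
    obtain ⟨his, hit⟩ := mem_sdiff.mp hi
    simp [w, ne_of_mem_erase his, hit]
  refine ⟨w, fun i => by dsimp only [w]; split_ifs <;> assumption, ?_⟩
  rw [← add_sum_erase _ _ (mem_univ i₀), ← sum_sdiff hts, hwt, hwt']
  simp [w, add_comm]

end

theorem norm_exp_neg_two_pi_I_mul (θ : ℝ) : ‖exp (-(2 * π * I * θ))‖ = 1 := by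
  rw [show -(2 * π * I * θ) = ((-(2 * π * θ) : ℝ) : ℂ) * I by push_cast; ring]
  exact norm_exp_ofReal_mul_I _

theorem exists_mem_Ico_exp_neg_two_pi_I_mul_eq {w : ℂ} (hw : ‖w‖ = 1) :
    ∃ θ ∈ Set.Ico (0 : ℝ) 1, exp (-(2 * π * I * θ)) = w := by
  set x := -w.arg / (2 * π)
  refine ⟨Int.fract x, ⟨Int.fract_nonneg x, Int.fract_lt_one x⟩, ?_⟩
  have hx : (x : ℂ) * (2 * π) = -w.arg := by
    simp only [x]
    push_cast
    field_simp
  have hphase : -(2 * π * I * (Int.fract x : ℝ)) = w.arg * I + ⌊x⌋ * (2 * π * I) := by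
    rw [Int.fract]
    push_cast
    linear_combination (-I) * hx
  rw [hphase, exp_add, exp_int_mul_two_pi_mul_I, mul_one]
  simpa [hw] using norm_mul_exp_arg_mul_I w

/-- **Lemma 2.2 (elementary geometric lemma).**  If `0 < r_1 ≤ r_2 ≤ ⋯ ≤ r_N` (`N > 2`) and
`r_N ≤ r_1 + ⋯ + r_{N-1}`, then the sums `∑ r_n e^{-2πiθ_n}` with `θ_n ∈ [0,1)` fill out the
closed disk of radius `r_1 + ⋯ + r_N` centred at the origin. -/
theorem phases_fill_disk (N : ℕ) (hN : 2 < N) (r : Fin N → ℝ)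
    (hpos : ∀ n, 0 < r n) (hmono : Monotone r)
    (hlast : r ⟨N - 1, by omega⟩ ≤
      ∑ n ∈ Finset.univ.filter (fun n : Fin N => (n : ℕ) < N - 1), r n) :
    {z : ℂ | ∃ θ : Fin N → ℝ, (∀ n, θ n ∈ Set.Ico (0 : ℝ) 1) ∧
        z = ∑ n, (r n : ℂ) * Complex.exp (-(2 * (Real.pi : ℂ) * Complex.I * (θ n : ℂ)))} =
      {z : ℂ | ‖z‖ ≤ ∑ n, r n} := by
  set last : Fin N := ⟨N - 1, by omega⟩
  have herase :
      Finset.univ.filter (fun n : Fin N => (n : ℕ) < N - 1) = Finset.univ.erase last := by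
    ext n
    have := n.isLt
    simp only [Finset.mem_filter, Finset.mem_univ, true_and, Finset.mem_erase, ne_eq, Fin.ext_iff,
      and_true, last]
    omega
  ext z
  constructor
  · rintro ⟨θ, -, rfl⟩
    refine (norm_sum_le _ _).trans_eq (Finset.sum_congr rfl fun n _ => ?_)
    rw [norm_mul, norm_exp_neg_two_pi_I_mul, mul_one, norm_real, Real.norm_of_nonneg (hpos n).le]
  · intro hz
    obtain ⟨w, hw, rfl⟩ := exists_norm_eq_one_sum_smul_eq (E := ℂ)
      (by simp [rank_real_complex]) last (fun n => (hpos n).le)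
      (fun n => hmono (Fin.le_iff_val_le_val.mpr (Nat.le_sub_one_of_lt n.isLt)))
      (herase ▸ hlast) hz
    choose θ hθ hθw using fun n => exists_mem_Ico_exp_neg_two_pi_I_mul_eq (hw n)
    exact ⟨θ, hθ, by simp only [hθw, real_smul]⟩
end

section
/- Let b be a complex-valued function on the prime numbers, and suppose there are constants C > 0 and η > 0 such that |b(p)| ≤ C p^η for every prime p. Then there exists a choice of real numbers θ_p, one for each prime p, such that for every ξ > 0 one has |Σ_{p ≤ ξ} b(p) · exp(−2πi θ_p)| ≤ C ξ^η, where the sum is over all primes p ≤ ξ. -/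
/-!
Rotate every term onto the real line, with sign opposite to that of the running partial sum.
The partial sums then stay real and satisfy `|s + t| ≤ max |s| |t|`, so each one is bounded by
the largest term so far, and `|b(p)| ≤ C p^η ≤ C ξ^η` for `p ≤ ξ`.
-/

open Finset

noncomputable def balancedStep (x a : ℝ) : ℝ := if 0 < x then x - a else x + a

lemma abs_balancedStep_sub (x a : ℝ) : |balancedStep x a - x| = |a| := by
  unfold balancedStep
  split_ifs <;> simp

lemma abs_balancedStep_le (x : ℝ) {a : ℝ} (ha : 0 ≤ a) : |balancedStep x a| ≤ max |x| a := by
  unfold balancedStep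
  split_ifs with hx
  · exact abs_le.2
      ⟨by linarith [le_max_right |x| a], by linarith [le_max_left |x| a, le_abs_self x]⟩
  · exact abs_le.2
      ⟨by linarith [le_max_left |x| a, neg_abs_le x], by linarith [le_max_right |x| a]⟩

noncomputable def balancedWalk (a : ℕ → ℝ) : ℕ → ℝ
  | 0 => 0
  | n + 1 => balancedStep (balancedWalk a n) (a n)

lemma abs_balancedWalk_le {a : ℕ → ℝ} (ha : ∀ k, 0 ≤ a k) {M : ℝ} (hM : 0 ≤ M) :
    ∀ {n}, (∀ k < n, a k ≤ M) → |balancedWalk a n| ≤ M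
  | 0, _ => by simpa [balancedWalk] using hM
  | n + 1, haM => by
    have ih := abs_balancedWalk_le ha hM fun k hk => haM k (Nat.lt_succ_of_lt hk)
    exact (abs_balancedStep_le _ (ha n)).trans (max_le ih (haM n n.lt_succ_self))

lemma sum_range_balancedWalk_sub (a : ℕ → ℝ) (n : ℕ) :
    ∑ k ∈ range n, (balancedWalk a (k + 1) - balancedWalk a k) = balancedWalk a n := by
  rw [sum_range_sub, balancedWalk, sub_zero]

lemma exists_mul_exp_eq_of_norm_eq {z w : ℂ} (h : ‖z‖ = ‖w‖) :
    ∃ θ : ℝ, z * Complex.exp (-(2 * Real.pi * Complex.I * θ)) = w := by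
  rcases eq_or_ne z 0 with rfl | hz
  · exact ⟨0, by simpa [eq_comm] using h⟩
  have hu : ‖w / z‖ = 1 := by rw [norm_div, ← h, div_self (norm_ne_zero_iff.2 hz)]
  obtain ⟨t, ht⟩ := (Complex.norm_eq_one_iff _).1 hu
  refine ⟨-t / (2 * Real.pi), ?_⟩
  have hangle : -(2 * Real.pi * Complex.I * ((-t / (2 * Real.pi) : ℝ) : ℂ)) = t * Complex.I := by
    push_cast
    field_simp [Real.pi_ne_zero]
  rw [hangle, ht, mul_div_cancel₀ _ hz]

theorem exists_phases_norm_sum_range_le (z : ℕ → ℂ) :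
    ∃ θ : ℕ → ℝ, ∀ n M, 0 ≤ M → (∀ k < n, ‖z k‖ ≤ M) →
      ‖∑ k ∈ range n, z k * Complex.exp (-(2 * Real.pi * Complex.I * θ k))‖ ≤ M := by
  have hnorm k :
      ‖z k‖ = ‖((balancedWalk (‖z ·‖) (k + 1) - balancedWalk (‖z ·‖) k : ℝ) : ℂ)‖ := by
    rw [Complex.norm_real, Real.norm_eq_abs, balancedWalk, abs_balancedStep_sub, abs_norm]
  choose θ hθ using fun k => exists_mul_exp_eq_of_norm_eq (hnorm k)
  refine ⟨θ, fun n M hM hzM => ?_⟩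
  simp only [hθ, ← Complex.ofReal_sum, sum_range_balancedWalk_sub, Complex.norm_real,
    Real.norm_eq_abs]
  exact abs_balancedWalk_le (fun k => norm_nonneg _) hM hzM

/-- **Claim 3.2 (sign-balanced phases).**  If `|b(p)| ≤ C p^η` for all primes `p`, one may pick
phases `θ_p` such that `|∑_{p ≤ ξ} b(p) e^{-2πi θ_p}| ≤ C ξ^η` for every `ξ > 0`. -/
theorem balanced_phases_exist (b : ℕ → ℂ) (C η : ℝ) (hC : 0 < C) (hη : 0 < η)
    (hb : ∀ p : ℕ, p.Prime → ‖b p‖ ≤ C * (p : ℝ) ^ η) :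
    ∃ θ : ℕ → ℝ, ∀ ξ : ℝ, 0 < ξ →
      ‖∑ p ∈ (Finset.range (Nat.floor ξ + 1)).filter Nat.Prime,
          b p * Complex.exp (-(2 * (Real.pi : ℂ) * Complex.I * (θ p : ℂ)))‖ ≤ C * ξ ^ η := by
  obtain ⟨θ, hθ⟩ := exists_phases_norm_sum_range_le fun p => if p.Prime then b p else 0
  refine ⟨θ, fun ξ hξ => ?_⟩
  rw [sum_filter]
  simp only [ite_mul, zero_mul] at hθ
  refine hθ _ _ (by positivity) fun p hp => ?_
  split_ifs with hprime
  · have hpξ : (p : ℝ) ≤ ξ := (Nat.cast_le.2 (Nat.lt_succ_iff.1 hp)).trans (Nat.floor_le hξ.le)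
    exact (hb p hprime).trans (by gcongr)
  · rw [norm_zero]
    positivity
end

section
/- Let (z_n)_{n≥1} be a sequence of complex numbers, and let (w_n)_{n≥1} be defined by the identity of formal power series exp(Σ_{n≥1} z_n X^n) = 1 + Σ_{n≥1} w_n X^n in ℂ[[X]]. Then for every n ≥ 1, |z_n| is at most the coefficient of X^n in the formal power series −log(1 − Σ_{m≥1} |w_m| X^m) = Σ_{k≥1} (1/k)(Σ_{m≥1} |w_m| X^m)^k, which has nonnegative real coefficients. -/
noncomputable section

/-- The exponential of a formal power series (intended for series with zero constant term):
the coefficient of `X^n` in `exp F = ∑_k F^k / k!` (only `k ≤ n` contribute when the constant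
term of `F` vanishes). -/
def PowerSeries.expOf {K : Type*} [Field K] (F : PowerSeries K) : PowerSeries K :=
  PowerSeries.mk fun n =>
    ∑ k ∈ Finset.range (n + 1), (k.factorial : K)⁻¹ * PowerSeries.coeff n (F ^ k)

/-!
Write `Z = ∑ z_n X^n` and `W = ∑ w_n X^n`. Since `expOf F` is `exp` with `F` substituted, the chain
rule gives `(expOf F)' = expOf F · F'`, while `(1 + X) · (log (1 + X))' = 1` gives
`f · (logOf f)' = f'`. So `logOf (expOf Z)` and `Z` have the same derivative and constant term,
whence `Z = logOf (1 + W)`, i.e. `z_n = ∑_{k ≤ n} (-1)^(k+1)/k · [X^n] W^k`. The bound follows from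
the triangle inequality and `‖[X^n] W^k‖ ≤ [X^n] (∑ ‖w_m‖ X^m)^k`.
-/

namespace PowerSeries

open Finset

section CommRing

variable {R : Type*} [CommRing R]

theorem coeff_pow_eq_zero_of_lt {g : R⟦X⟧} (hg : constantCoeff g = 0) {n d : ℕ} (h : n < d) :
    coeff n (g ^ d) = 0 :=
  coeff_of_lt_order _
    ((le_order_pow_of_constantCoeff_eq_zero d hg).trans_lt' (by exact_mod_cast h))

theorem coeff_subst_eq_sum_range {f g : R⟦X⟧} (hg : constantCoeff g = 0) (n : ℕ) :
    coeff n (f.subst g) = ∑ d ∈ range (n + 1), coeff d f * coeff n (g ^ d) := by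
  rw [coeff_subst' (HasSubst.of_constantCoeff_zero' hg)]
  refine finsum_eq_sum_of_support_subset _ fun d hd => ?_
  by_contra hdn
  simp only [coe_range, Set.mem_Iio, not_lt] at hdn
  exact hd (by simp only [coeff_pow_eq_zero_of_lt hg (by omega : n < d), smul_zero])

variable [Algebra ℚ R]

theorem one_add_X_mul_derivative_log : (1 + X) * d⁄dX R (log R) = 1 := by
  ext (_ | n) <;> simp [deriv_log, add_mul, coeff_one, pow_succ]

theorem mul_derivative_logOf {f : R⟦X⟧} (hf : constantCoeff f = 1) :
    f * d⁄dX R (logOf f) = d⁄dX R f := by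
  have hsub : HasSubst (f - 1) := HasSubst.of_constantCoeff_zero' (by simp [hf])
  have hinv : f * (d⁄dX R (log R)).subst (f - 1) = 1 := by
    have := congrArg (subst (f - 1)) (one_add_X_mul_derivative_log (R := R))
    rwa [← coe_substAlgHom hsub, map_mul, map_add, map_one, coe_substAlgHom, subst_X hsub,
      add_sub_cancel] at this
  rw [logOf_eq, derivative_subst hsub, ← mul_assoc, hinv, one_mul, map_sub,
    Derivation.map_one_eq_zero, sub_zero]

end CommRing

section Field

variable {K : Type*} [Field K]

theorem constantCoeff_expOf (F : K⟦X⟧) : constantCoeff F.expOf = 1 := by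
  rw [← coeff_zero_eq_constantCoeff_apply, expOf, coeff_mk]
  simp

variable [CharZero K]

theorem expOf_eq_subst_exp {F : K⟦X⟧} (hF : constantCoeff F = 0) :
    F.expOf = (exp K).subst F := by
  ext n
  simp [expOf, coeff_subst_eq_sum_range hF, coeff_exp]

theorem derivative_expOf {F : K⟦X⟧} (hF : constantCoeff F = 0) :
    d⁄dX K F.expOf = F.expOf * d⁄dX K F := by
  rw [expOf_eq_subst_exp hF, derivative_subst (HasSubst.of_constantCoeff_zero' hF),
    derivative_exp]

theorem logOf_expOf {F : K⟦X⟧} (hF : constantCoeff F = 0) : logOf F.expOf = F := by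
  have hE : F.expOf ≠ 0 := fun h => by simpa [h] using constantCoeff_expOf F
  refine derivative.ext ?_ (by rw [constantCoeff_logOf (constantCoeff_expOf F), hF])
  apply mul_left_cancel₀ hE
  rw [mul_derivative_logOf (constantCoeff_expOf F), derivative_expOf hF]

end Field

section Majorant

variable {R : Type*} [SeminormedRing R]

theorem norm_coeff_mul_le_of_le {A A' : R⟦X⟧} {B B' : ℝ⟦X⟧}
    (hA : ∀ m, ‖coeff m A‖ ≤ coeff m B) (hA' : ∀ m, ‖coeff m A'‖ ≤ coeff m B') (n : ℕ) :
    ‖coeff n (A * A')‖ ≤ coeff n (B * B') := by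
  rw [coeff_mul, coeff_mul]
  refine (norm_sum_le _ _).trans (sum_le_sum fun p _ => (norm_mul_le _ _).trans ?_)
  exact mul_le_mul (hA _) (hA' _) (norm_nonneg _) ((norm_nonneg _).trans (hA _))

theorem norm_coeff_pow_le_of_le [NormOneClass R] {A : R⟦X⟧} {B : ℝ⟦X⟧}
    (hA : ∀ m, ‖coeff m A‖ ≤ coeff m B) (k n : ℕ) :
    ‖coeff n (A ^ k)‖ ≤ coeff n (B ^ k) := by
  induction k generalizing n with
  | zero => rw [pow_zero, pow_zero, coeff_one, coeff_one]; split_ifs <;> simp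
  | succ k ih => rw [pow_succ, pow_succ]; exact norm_coeff_mul_le_of_le ih hA n

end Majorant

section RCLike

variable {𝕜 : Type*} [RCLike 𝕜]

-- `d = 0` is covered by `(0 : ℝ)⁻¹ = 0`.
theorem norm_coeff_log (d : ℕ) : ‖coeff d (log 𝕜)‖ = (d : ℝ)⁻¹ := by
  rw [coeff_log]
  split_ifs with hd
  · simp [hd]
  · simp

theorem norm_coeff_logOf_one_add_le {W : 𝕜⟦X⟧} {B : ℝ⟦X⟧} (hW : constantCoeff W = 0)
    (hB : ∀ m, ‖coeff m W‖ ≤ coeff m B) (n : ℕ) :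
    ‖coeff n (logOf (1 + W))‖ ≤ ∑ k ∈ Icc 1 n, (k : ℝ)⁻¹ * coeff n (B ^ k) := by
  rw [logOf_eq, add_sub_cancel_left, coeff_subst_eq_sum_range hW]
  calc ‖∑ k ∈ range (n + 1), coeff k (log 𝕜) * coeff n (W ^ k)‖
      ≤ ∑ k ∈ range (n + 1), ‖coeff k (log 𝕜)‖ * ‖coeff n (W ^ k)‖ :=
        (norm_sum_le _ _).trans (sum_le_sum fun k _ => norm_mul_le _ _)
    _ ≤ ∑ k ∈ range (n + 1), (k : ℝ)⁻¹ * coeff n (B ^ k) := by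
        gcongr with k
        · rw [norm_coeff_log]
        · exact norm_coeff_pow_le_of_le hB k n
    _ = ∑ k ∈ Icc 1 n, (k : ℝ)⁻¹ * coeff n (B ^ k) :=
        (sum_subset (fun k hk => by simp at hk ⊢; omega) fun k _ hk => by simp_all).symm

end RCLike

end PowerSeries

/-- **Lemma 3.6 (i).**  If `1 + ∑ w_n X^n = exp (∑ z_n X^n)` in `ℂ[[X]]`, then `|z_n|` is
bounded by the `n`-th coefficient of `-log (1 - ∑ |w_m| X^m) = ∑_{k ≥ 1} (1/k)(∑ |w_m| X^m)^k`. -/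
theorem log_coeff_bound (z w : ℕ → ℂ)
    (hw : (1 : PowerSeries ℂ) + PowerSeries.mk (fun n => if n = 0 then 0 else w n) =
      PowerSeries.expOf (PowerSeries.mk fun n => if n = 0 then 0 else z n)) :
    ∀ n : ℕ, 1 ≤ n →
      ‖z n‖ ≤ ∑ k ∈ Finset.Icc 1 n, (k : ℝ)⁻¹ *
        PowerSeries.coeff n
          ((PowerSeries.mk fun m => if m = 0 then 0 else ‖w m‖ : PowerSeries ℝ) ^ k) := by
  intro n hn
  set W : PowerSeries ℂ := PowerSeries.mk fun n => if n = 0 then 0 else w n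
  set Z : PowerSeries ℂ := PowerSeries.mk fun n => if n = 0 then 0 else z n
  have hZ : Z = PowerSeries.logOf (1 + W) := by
    rw [hw, PowerSeries.logOf_expOf
      (by simp [Z, ← PowerSeries.coeff_zero_eq_constantCoeff_apply])]
  have hzn : z n = PowerSeries.coeff n Z := by simp [Z, Nat.one_le_iff_ne_zero.mp hn]
  rw [hzn, hZ]
  refine PowerSeries.norm_coeff_logOf_one_add_le
    (by simp [W, ← PowerSeries.coeff_zero_eq_constantCoeff_apply]) (fun m => ?_) n
  by_cases hm : m = 0 <;> simp [W, hm]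

end
end

section
/- Let 1/2 < σ₀ < 1, let N ≥ 2 be an integer, let 0 < η < σ₀ and C > 0, and let b be a complex-valued function on the primes with |b(p)| ≤ C p^η for all primes p. Let X ≥ 2, let Y ≥ 2X + 1, let 0 < H ≤ Y, fix j ∈ {0,1,…,N−1}, set Y_j = 2^j Y, let p* be a prime with X < p* ≤ 2X, and let M_j = {p*} ∪ {p prime : Y_j < p ≤ Y_j + H}. For real numbers θ_p (p ∈ M_j) and 0 ≤ k ≤ N−1 define the k-th derivative sum D_k = Σ_{p ∈ M_j} (−log p)^k b(p) exp(−2πiθ_p) p^{−σ₀} and φ = Σ_{p ∈ M_j} b(p) exp(−2πiθ_p) p^{−σ₀}. Then there is a constant C' depending only on C, σ₀, N, η such that | D_k − (−log Y_j)^k φ | ≤ C' ( (log Y)^{N−2} H² Y^{−(1+σ₀−η)} + (log Y)^{N−1} X^{−(σ₀−η)} ). -/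
/-!
Write `a_p = b(p) e(-θ_p) p^{-σ₀}`, so that `D_k - (-log Y_j)^k φ = ∑_{p ∈ M_j} ((-log p)^k - (-log Y_j)^k) a_p`
with `|a_p| ≤ C p^{η-σ₀}`. All of `Y_j` and the `p ∈ M_j` lie in `[1, 2^N Y]`, so their logarithms are at
most `L = (N+1) log Y`. For each of the at most `H + 1` integers `p ∈ (Y_j, Y_j + H]` the mean value theorem
gives `|(-log p)^k - (-log Y_j)^k| ≤ k L^{k-1} (log p - log Y_j) ≤ k L^{k-1} H / Y_j`, and
`(H + 1) (H / Y_j) Y_j^{η-σ₀} ≤ H² Y^{-(1+σ₀-η)} + X^{-(σ₀-η)}` because `H ≤ Y` and `X ≤ Y ≤ Y_j`.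
The single prime `p* ∈ (X, 2X]` contributes at most `2 L^k C X^{η-σ₀}`.
-/

open Finset Real

lemma log_sub_log_le_div {x y : ℝ} (hx : 0 < x) (hy : 0 < y) : log x - log y ≤ (x - y) / y := by
  have := log_le_sub_one_of_pos (div_pos hx hy)
  rwa [log_div hx.ne' hy.ne', div_sub_one hy.ne'] at this

lemma log_le_succ_mul_log {N : ℕ} {x Y : ℝ} (hY : 1 ≤ log Y) (hx : 0 < x) (hxY : x ≤ 2 ^ N * Y) :
    log x ≤ (N + 1) * log Y := by
  have hY0 : 0 < Y := pos_of_mul_pos_right (hx.trans_le hxY) (by positivity)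
  calc log x ≤ log (2 ^ N * Y) := log_le_log hx hxY
    _ = N * log 2 + log Y := by rw [log_mul (by positivity) hY0.ne', log_pow]
    _ ≤ (N + 1) * log Y := by
      have := log_two_lt_d9
      have : (0:ℝ) ≤ N := N.cast_nonneg
      nlinarith

lemma two_pow_mul_add_le {j N : ℕ} {Y H : ℝ} (hj : j < N) (hY : 0 ≤ Y) (hHY : H ≤ Y) :
    2 ^ j * Y + H ≤ 2 ^ N * Y := by
  have : (2 : ℝ) ^ (j + 1) ≤ 2 ^ N := pow_le_pow_right₀ one_le_two hj
  have : (1 : ℝ) ≤ 2 ^ j := one_le_pow₀ one_le_two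
  rw [pow_succ] at *
  nlinarith

lemma pow_le_pow_mul_pow {a l : ℝ} {m n N : ℕ} (ha : 1 ≤ a) (hl : 1 ≤ l) (hmN : m ≤ N)
    (hmn : m ≤ n) : (a * l) ^ m ≤ a ^ N * l ^ n := by
  rw [mul_pow]
  gcongr

lemma abs_pow_sub_pow_le_two_mul_pow {a b M : ℝ} (ha : |a| ≤ M) (hb : |b| ≤ M) (k : ℕ) :
    |a ^ k - b ^ k| ≤ 2 * M ^ k := by
  calc |a ^ k - b ^ k| ≤ |a| ^ k + |b| ^ k := by rw [← abs_pow, ← abs_pow]; exact abs_sub _ _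
    _ ≤ 2 * M ^ k := by
      have := pow_le_pow_left₀ (abs_nonneg a) ha k
      have := pow_le_pow_left₀ (abs_nonneg b) hb k
      linarith

lemma natCast_card_le_add_one {s : Finset ℕ} {a h : ℝ} (ha : 0 ≤ a) (hh : 0 ≤ h)
    (hs : ∀ n ∈ s, a < n ∧ (n : ℝ) ≤ a + h) : (#s : ℝ) ≤ h + 1 := by
  have hsub : s ⊆ Ioc ⌊a⌋₊ ⌊a + h⌋₊ := fun n hn =>
    mem_Ioc.2 ⟨(Nat.floor_lt ha).2 (hs n hn).1, Nat.le_floor (hs n hn).2⟩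
  have hcard := card_le_card hsub
  rw [Nat.card_Ioc] at hcard
  have hfloor : ⌊a⌋₊ ≤ ⌊a + h⌋₊ := Nat.floor_mono (by linarith)
  have := Nat.floor_le (add_nonneg ha hh)
  have := Nat.sub_one_lt_floor a
  calc (#s : ℝ) ≤ ((⌊a + h⌋₊ - ⌊a⌋₊ : ℕ) : ℝ) := by exact_mod_cast hcard
    _ ≤ h + 1 := by rw [Nat.cast_sub hfloor]; linarith

lemma norm_sum_mul_sub_mul_sum_le {ι R : Type*} [NonUnitalSeminormedRing R] (s : Finset ι)
    (f : ι → R) (c : R) (a : ι → R) :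
    ‖∑ i ∈ s, f i * a i - c * ∑ i ∈ s, a i‖ ≤ ∑ i ∈ s, ‖f i - c‖ * ‖a i‖ := by
  rw [mul_sum, ← sum_sub_distrib]
  refine (norm_sum_le _ _).trans (sum_le_sum fun i _ => ?_)
  rw [← sub_mul]
  exact norm_mul_le _ _

lemma norm_neg_ofReal_pow_sub (x y : ℝ) (k : ℕ) :
    ‖(-(x : ℂ)) ^ k - (-(y : ℂ)) ^ k‖ = |(-x) ^ k - (-y) ^ k| := by
  rw [← Real.norm_eq_abs, ← Complex.norm_real]
  push_cast
  rfl

lemma norm_neg_log_pow_sub_le_two_mul_pow {x y L : ℝ} (hx : 1 ≤ x) (hy : 1 ≤ y)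
    (hxL : log x ≤ L) (hyL : log y ≤ L) (k : ℕ) :
    ‖(-(log x : ℂ)) ^ k - (-(log y : ℂ)) ^ k‖ ≤ 2 * L ^ k := by
  rw [norm_neg_ofReal_pow_sub]
  apply abs_pow_sub_pow_le_two_mul_pow <;>
    rwa [abs_neg, abs_of_nonneg (log_nonneg ‹_›)]

lemma norm_neg_log_pow_sub_le_of_le_add {x y h L : ℝ} (hy : 1 ≤ y) (hyx : y ≤ x) (hxh : x ≤ y + h)
    (hxL : log x ≤ L) (k : ℕ) :
    ‖(-(log x : ℂ)) ^ k - (-(log y : ℂ)) ^ k‖ ≤ k * L ^ (k - 1) * (h / y) := by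
  have hy0 : 0 < y := by linarith
  have hlog : log y ≤ log x := log_le_log hy0 hyx
  have hdiff : |(-log x) - (-log y)| ≤ h / y := by
    rw [neg_sub_neg, abs_sub_comm, abs_of_nonneg (by linarith)]
    calc log x - log y ≤ (x - y) / y := log_sub_log_le_div (by linarith) hy0
      _ ≤ h / y := by gcongr; linarith
  have hmax : max |-log x| |-log y| ≤ L := by
    rw [abs_neg, abs_neg, abs_of_nonneg (log_nonneg (hy.trans hyx)), abs_of_nonneg (log_nonneg hy)]
    exact max_le hxL (hlog.trans hxL)
  rw [norm_neg_ofReal_pow_sub]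
  calc |(-log x) ^ k - (-log y) ^ k| ≤ |(-log x) - (-log y)| * k * max |-log x| |-log y| ^ (k - 1) :=
        abs_pow_sub_pow_le ..
    _ ≤ h / y * k * L ^ (k - 1) := by
      have : 0 ≤ h := by linarith
      gcongr
    _ = k * L ^ (k - 1) * (h / y) := by ring

lemma sum_norm_neg_log_pow_sub_mul_le {s : Finset ℕ} {a : ℕ → ℂ} {y h L A : ℝ} (hy : 1 ≤ y)
    (hh : 0 ≤ h) (hs : ∀ n ∈ s, y < n ∧ (n : ℝ) ≤ y + h) (hL : log (y + h) ≤ L)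
    (ha : ∀ n ∈ s, ‖a n‖ ≤ A) (hA : 0 ≤ A) (k : ℕ) :
    ∑ n ∈ s, ‖(-(log n : ℂ)) ^ k - (-(log y : ℂ)) ^ k‖ * ‖a n‖ ≤
      k * L ^ (k - 1) * ((h + 1) * (h / y) * A) := by
  have hL0 : 0 ≤ L := (log_nonneg (by linarith)).trans hL
  have hterm : ∀ n ∈ s, ‖(-(log n : ℂ)) ^ k - (-(log y : ℂ)) ^ k‖ * ‖a n‖ ≤
      k * L ^ (k - 1) * (h / y) * A := fun n hn =>
    mul_le_mul (norm_neg_log_pow_sub_le_of_le_add hy (hs n hn).1.le (hs n hn).2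
        ((log_le_log (by linarith [(hs n hn).1]) (hs n hn).2).trans hL) k)
      (ha n hn) (norm_nonneg _) (by positivity)
  calc _ ≤ #s • (k * L ^ (k - 1) * (h / y) * A) := sum_le_card_nsmul _ _ _ hterm
    _ ≤ (h + 1) * (k * L ^ (k - 1) * (h / y) * A) := by
      rw [nsmul_eq_mul]
      gcongr
      exact natCast_card_le_add_one (by linarith) hh hs
    _ = k * L ^ (k - 1) * ((h + 1) * (h / y) * A) := by ring

noncomputable def twistedCoeff (b : ℕ → ℂ) (θ : ℕ → ℝ) (σ₀ : ℝ) (p : ℕ) : ℂ :=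
  b p * Complex.exp (-(2 * (π : ℂ) * Complex.I * (θ p : ℂ))) * (((p : ℝ) ^ (-σ₀) : ℝ) : ℂ)

lemma norm_twistedCoeff_le {b : ℕ → ℂ} {C η x : ℝ} (θ : ℕ → ℝ) {σ₀ : ℝ} {p : ℕ}
    (hb : ‖b p‖ ≤ C * (p : ℝ) ^ η) (hC : 0 ≤ C) (hησ : η ≤ σ₀) (hx : 0 < x) (hxp : x ≤ p) :
    ‖twistedCoeff b θ σ₀ p‖ ≤ C * x ^ (η - σ₀) := by
  have hp : (0 : ℝ) < p := hx.trans_le hxp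
  have hexp : ‖Complex.exp (-(2 * (π : ℂ) * Complex.I * (θ p : ℂ)))‖ = 1 := by
    rw [Complex.norm_exp]; simp
  rw [twistedCoeff, norm_mul, norm_mul, hexp, mul_one, Complex.norm_real, norm_of_nonneg (by positivity)]
  calc ‖b p‖ * (p : ℝ) ^ (-σ₀) ≤ C * (p : ℝ) ^ η * (p : ℝ) ^ (-σ₀) := by gcongr
    _ = C * (p : ℝ) ^ (η - σ₀) := by rw [mul_assoc, ← rpow_add hp, sub_eq_add_neg]
    _ ≤ C * x ^ (η - σ₀) :=
      mul_le_mul_of_nonneg_left (rpow_le_rpow_of_nonpos hx hxp (by linarith)) hC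

lemma short_interval_weight_le {X Y Yj H η σ₀ C : ℝ} (hX : 0 < X) (hXY : X ≤ Y) (hYYj : Y ≤ Yj)
    (hH : 0 ≤ H) (hHY : H ≤ Y) (hησ : η ≤ σ₀) (hC : 0 ≤ C) :
    (H + 1) * (H / Yj) * (C * Yj ^ (η - σ₀)) ≤
      C * (H ^ 2 * Y ^ (-(1 + σ₀ - η)) + X ^ (-(σ₀ - η))) := by
  have hY : 0 < Y := hX.trans_le hXY
  have hYj : 0 < Yj := hY.trans_le hYYj
  have hdecay : Yj ^ (η - σ₀) / Yj ≤ Y ^ (-(1 + σ₀ - η)) := by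
    rw [← rpow_sub_one hYj.ne', show -(1 + σ₀ - η) = η - σ₀ - 1 by ring]
    exact rpow_le_rpow_of_nonpos hY hYYj (by linarith)
  have hlinear : H * Y ^ (-(1 + σ₀ - η)) ≤ X ^ (-(σ₀ - η)) := by
    rw [show -(1 + σ₀ - η) = (η - σ₀) - 1 by ring, rpow_sub_one hY.ne', neg_sub]
    calc H * (Y ^ (η - σ₀) / Y) = H / Y * Y ^ (η - σ₀) := by ring
      _ ≤ 1 * X ^ (η - σ₀) :=
        mul_le_mul ((div_le_one hY).2 hHY) (rpow_le_rpow_of_nonpos hX hXY (by linarith))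
          (by positivity) zero_le_one
      _ = X ^ (η - σ₀) := one_mul _
  calc (H + 1) * (H / Yj) * (C * Yj ^ (η - σ₀)) = C * ((H ^ 2 + H) * (Yj ^ (η - σ₀) / Yj)) := by
        ring
    _ ≤ C * ((H ^ 2 + H) * Y ^ (-(1 + σ₀ - η))) := by gcongr
    _ ≤ C * (H ^ 2 * Y ^ (-(1 + σ₀ - η)) + X ^ (-(σ₀ - η))) := by rw [add_mul]; gcongr

lemma two_mul_pow_add_mul_pow_le {ℓ C P Q W : ℝ} {N k : ℕ} (hℓ : 1 ≤ ℓ) (hk : k ≤ N - 1)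
    (hC : 0 ≤ C) (hP : 0 ≤ P) (hQ : 0 ≤ Q) (hW : W ≤ C * (P + Q)) :
    2 * ((N + 1) * ℓ) ^ k * (C * Q) + k * ((N + 1) * ℓ) ^ (k - 1) * W ≤
      (N + 2) * (N + 1) ^ N * C * (ℓ ^ (N - 2) * P + ℓ ^ (N - 1) * Q) := by
  have hN : (1 : ℝ) ≤ N + 1 := by linarith [N.cast_nonneg (α := ℝ)]
  have hkN : (k : ℝ) ≤ N := by exact_mod_cast hk.trans (N.sub_le 1)
  have h₁ := pow_le_pow_mul_pow hN hℓ (hk.trans (N.sub_le 1)) hk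
  have h₂ := pow_le_pow_mul_pow (m := k - 1) (n := N - 2) (N := N) hN hℓ (by omega) (by omega)
  have h₃ : ℓ ^ (N - 2) ≤ ℓ ^ (N - 1) := pow_le_pow_right₀ hℓ (by omega)
  set a : ℝ := (N + 1) ^ N
  have ha : 0 ≤ a := by positivity
  calc 2 * ((N + 1) * ℓ) ^ k * (C * Q) + k * ((N + 1) * ℓ) ^ (k - 1) * W
      ≤ 2 * (a * ℓ ^ (N - 1)) * (C * Q) + N * (a * ℓ ^ (N - 2)) * (C * (P + Q)) := by
        gcongr ?_ + ?_
        · gcongr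
        · calc k * ((N + 1) * ℓ) ^ (k - 1) * W ≤ k * ((N + 1) * ℓ) ^ (k - 1) * (C * (P + Q)) := by
                gcongr
            _ ≤ N * (a * ℓ ^ (N - 2)) * (C * (P + Q)) := by gcongr
    _ = 2 * (a * ℓ ^ (N - 1)) * (C * Q) + N * a * C * (ℓ ^ (N - 2) * P + ℓ ^ (N - 2) * Q) := by
        ring
    _ ≤ 2 * (a * ℓ ^ (N - 1)) * (C * Q) + N * a * C * (ℓ ^ (N - 2) * P + ℓ ^ (N - 1) * Q) := by
        gcongr
    _ ≤ (N + 2) * a * C * (ℓ ^ (N - 2) * P + ℓ ^ (N - 1) * Q) := by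
        have : 0 ≤ a * C * ℓ ^ (N - 2) * P := by positivity
        linarith

theorem short_interval_derivative_sums_general
    (σ₀ η C : ℝ) (N : ℕ) (hη : η < σ₀) (hC : 0 < C) :
    ∃ C' : ℝ, 0 < C' ∧
      ∀ b : ℕ → ℂ, (∀ p : ℕ, p.Prime → ‖b p‖ ≤ C * (p : ℝ) ^ η) →
      ∀ X Y H : ℝ, 2 ≤ X → 2 * X + 1 ≤ Y → 0 < H → H ≤ Y →
      ∀ j : ℕ, j < N →
      ∀ pstar : ℕ, pstar.Prime → X < (pstar : ℝ) → (pstar : ℝ) ≤ 2 * X →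
      ∀ θ : ℕ → ℝ, ∀ k : ℕ, k ≤ N - 1 →
        ‖(∑ p ∈ insert pstar
              ((Finset.range (Nat.floor (2 ^ j * Y + H) + 1)).filter
                (fun p : ℕ => p.Prime ∧ 2 ^ j * Y < (p : ℝ) ∧ (p : ℝ) ≤ 2 ^ j * Y + H)),
            ((-Real.log p : ℂ)) ^ k * b p *
              Complex.exp (-(2 * (Real.pi : ℂ) * Complex.I * (θ p : ℂ))) *
              (((p : ℝ) ^ (-σ₀) : ℝ) : ℂ)) -
          ((-Real.log (2 ^ j * Y) : ℂ)) ^ k *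
            ∑ p ∈ insert pstar
              ((Finset.range (Nat.floor (2 ^ j * Y + H) + 1)).filter
                (fun p : ℕ => p.Prime ∧ 2 ^ j * Y < (p : ℝ) ∧ (p : ℝ) ≤ 2 ^ j * Y + H)),
              b p * Complex.exp (-(2 * (Real.pi : ℂ) * Complex.I * (θ p : ℂ))) *
                (((p : ℝ) ^ (-σ₀) : ℝ) : ℂ)‖ ≤
        C' * (Real.log Y ^ (N - 2) * H ^ 2 * Y ^ (-(1 + σ₀ - η)) +
          Real.log Y ^ (N - 1) * X ^ (-(σ₀ - η))) := by
  refine ⟨(N + 2) * (N + 1) ^ N * C, by positivity, ?_⟩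
  intro b hb X Y H hX hXY hH hHY j hj pstar hps hXps hps2X θ k hk
  set Yj : ℝ := 2 ^ j * Y
  set F := (range (⌊Yj + H⌋₊ + 1)).filter (fun p : ℕ => p.Prime ∧ Yj < (p : ℝ) ∧ (p : ℝ) ≤ Yj + H)
  have hlogY : 1 ≤ log Y := by
    rw [le_log_iff_exp_le (by linarith)]
    linarith [exp_one_lt_d9]
  have hY0 : 0 < Y := by linarith
  have hYYj : Y ≤ Yj := le_mul_of_one_le_left hY0.le (one_le_pow₀ one_le_two)
  have hYjH : Yj + H ≤ 2 ^ N * Y := two_pow_mul_add_le hj (by linarith) hHY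
  have hF : ∀ p ∈ F, Yj < p ∧ (p : ℝ) ≤ Yj + H := fun p hp => (mem_filter.1 hp).2.2
  have hpsF : pstar ∉ F := fun h => by linarith [(hF _ h).1]
  have hstar : ‖(-(log pstar : ℂ)) ^ k - (-(log Yj : ℂ)) ^ k‖ * ‖twistedCoeff b θ σ₀ pstar‖ ≤
      2 * ((N + 1) * log Y) ^ k * (C * X ^ (-(σ₀ - η))) := by
    rw [neg_sub]
    exact mul_le_mul
      (norm_neg_log_pow_sub_le_two_mul_pow (by exact_mod_cast hps.one_lt.le) (by linarith)
        (log_le_succ_mul_log hlogY (by linarith) (by linarith))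
        (log_le_succ_mul_log hlogY (by linarith) (by linarith)) k)
      (norm_twistedCoeff_le θ (hb _ hps) hC.le hη.le (by linarith) hXps.le)
      (norm_nonneg _) (by positivity)
  have hshort := sum_norm_neg_log_pow_sub_mul_le (by linarith) hH.le hF
    (log_le_succ_mul_log hlogY (by linarith) hYjH)
    (fun p hp => norm_twistedCoeff_le θ (hb p (mem_filter.1 hp).2.1) hC.le hη.le (by linarith)
      (hF p hp).1.le) (by positivity) k
  have hweight := short_interval_weight_le (X := X) (by linarith) (by linarith) hYYj hH.le hHY hη.le
    hC.le
  have key := norm_sum_mul_sub_mul_sum_le (insert pstar F) (fun p => (-(log p : ℂ)) ^ k)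
    ((-(log Yj : ℂ)) ^ k) (twistedCoeff b θ σ₀)
  simp only [twistedCoeff, ← mul_assoc] at key
  refine key.trans ?_
  rw [sum_insert hpsF, mul_assoc (log Y ^ (N - 2))]
  exact (add_le_add hstar hshort).trans
    (two_mul_pow_add_mul_pow_le hlogY hk hC.le (by positivity) (by positivity) hweight)

/-- **Claim 3.5 (Claim FSE).**  For `M_j = {p*} ∪ {Y_j < p ≤ Y_j + H}` (`Y_j = 2^j Y`) and
`D_k = ∑_{p ∈ M_j} (-log p)^k b(p) e^{-2πiθ_p} p^{-σ₀}`, one has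
`|D_k - (-log Y_j)^k D_0| ≤ C' ((log Y)^{N-2} H² Y^{-(1+σ₀-η)} + (log Y)^{N-1} X^{-(σ₀-η)})`
with `C'` depending only on `C, σ₀, N, η`. -/
theorem short_interval_derivative_sums
    (σ₀ η C : ℝ) (N : ℕ) (hσ₀ : 1 / 2 < σ₀) (hσ₀1 : σ₀ < 1) (hN : 2 ≤ N)
    (hη0 : 0 < η) (hη : η < σ₀) (hC : 0 < C) :
    ∃ C' : ℝ, 0 < C' ∧
      ∀ b : ℕ → ℂ, (∀ p : ℕ, p.Prime → ‖b p‖ ≤ C * (p : ℝ) ^ η) →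
      ∀ X Y H : ℝ, 2 ≤ X → 2 * X + 1 ≤ Y → 0 < H → H ≤ Y →
      ∀ j : ℕ, j < N →
      ∀ pstar : ℕ, pstar.Prime → X < (pstar : ℝ) → (pstar : ℝ) ≤ 2 * X →
      ∀ θ : ℕ → ℝ, ∀ k : ℕ, k ≤ N - 1 →
        ‖(∑ p ∈ insert pstar
              ((Finset.range (Nat.floor (2 ^ j * Y + H) + 1)).filter
                (fun p : ℕ => p.Prime ∧ 2 ^ j * Y < (p : ℝ) ∧ (p : ℝ) ≤ 2 ^ j * Y + H)),
            ((-Real.log p : ℂ)) ^ k * b p *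
              Complex.exp (-(2 * (Real.pi : ℂ) * Complex.I * (θ p : ℂ))) *
              (((p : ℝ) ^ (-σ₀) : ℝ) : ℂ)) -
          ((-Real.log (2 ^ j * Y) : ℂ)) ^ k *
            ∑ p ∈ insert pstar
              ((Finset.range (Nat.floor (2 ^ j * Y + H) + 1)).filter
                (fun p : ℕ => p.Prime ∧ 2 ^ j * Y < (p : ℝ) ∧ (p : ℝ) ≤ 2 ^ j * Y + H)),
              b p * Complex.exp (-(2 * (Real.pi : ℂ) * Complex.I * (θ p : ℂ))) *
                (((p : ℝ) ^ (-σ₀) : ℝ) : ℂ)‖ ≤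
        C' * (Real.log Y ^ (N - 2) * H ^ 2 * Y ^ (-(1 + σ₀ - η)) +
          Real.log Y ^ (N - 1) * X ^ (-(σ₀ - η))) :=
  short_interval_derivative_sums_general σ₀ η C N hη hC
end
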